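/- Let (v,u) be a C² solution of the p-system on (0,T)×ℝ. Then at every point of (0,T)×ℝ the decoupled Riccati equations ∂₊α = −b α² and ∂₋β = −b β² hold, where b = K_c ((γ+1)/(2(γ−1))) a^{(3−γ)/(2(γ−1))}. -/

import Mathlib

/- STATEMENT 2: For a C² solution of the p-system on (0,T)×ℝ, the decoupled
Riccati equations ∂₊α = −b α² and ∂₋β = −b β² hold, with
b = K_c ((γ+1)/(2(γ−1))) a^{(3−γ)/(2(γ−1))}. -/

noncomputable section
open Real Set

/-- Partial derivative with respect to time. -/
def pt (f : ℝ → ℝ → ℝ) (t x : ℝ) : ℝ := deriv (fun τ => f τ x) t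

/-- Partial derivative with respect to space. -/
def px (f : ℝ → ℝ → ℝ) (t x : ℝ) : ℝ := deriv (fun y => f t y) x

def IsC1On (f : ℝ → ℝ → ℝ) (D : Set (ℝ × ℝ)) : Prop :=
  ContDiffOn ℝ 1 (fun q : ℝ × ℝ => f q.1 q.2) D

def IsC2On (f : ℝ → ℝ → ℝ) (D : Set (ℝ × ℝ)) : Prop :=
  ContDiffOn ℝ 2 (fun q : ℝ × ℝ => f q.1 q.2) D

/-- sound speed `c = √(Kγ) v^{−(γ+1)/2}` (isentropic). -/
def cP (K γ : ℝ) (v : ℝ → ℝ → ℝ) (t x : ℝ) : ℝ :=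
  Real.sqrt (K * γ) * v t x ^ (-(γ + 1) / 2)

/-- `a = (2√(Kγ)/(γ−1)) v^{−(γ−1)/2}`. -/
def aP (K γ : ℝ) (v : ℝ → ℝ → ℝ) (t x : ℝ) : ℝ :=
  2 * Real.sqrt (K * γ) / (γ - 1) * v t x ^ (-(γ - 1) / 2)

/-- Riemann invariant `s = u + a`. -/
def sP (K γ : ℝ) (v u : ℝ → ℝ → ℝ) (t x : ℝ) : ℝ := u t x + aP K γ v t x

/-- Riemann invariant `r = u − a`. -/
def rP (K γ : ℝ) (v u : ℝ → ℝ → ℝ) (t x : ℝ) : ℝ := u t x - aP K γ v t x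

/-- gradient variable `α = a^{(γ+1)/(2(γ−1))} s_x`. -/
def alphaP (K γ : ℝ) (v u : ℝ → ℝ → ℝ) (t x : ℝ) : ℝ :=
  aP K γ v t x ^ ((γ + 1) / (2 * (γ - 1))) * px (sP K γ v u) t x

/-- gradient variable `β = a^{(γ+1)/(2(γ−1))} r_x`. -/
def betaP (K γ : ℝ) (v u : ℝ → ℝ → ℝ) (t x : ℝ) : ℝ :=
  aP K γ v t x ^ ((γ + 1) / (2 * (γ - 1))) * px (rP K γ v u) t x

/-- `K_v = (2√(Kγ)/(γ−1))^{2/(γ−1)}`. -/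
def KvC (K γ : ℝ) : ℝ := (2 * Real.sqrt (K * γ) / (γ - 1)) ^ (2 / (γ - 1))

/-- `K_c = √(Kγ) K_v^{−(γ+1)/2}`. -/
def KcC (K γ : ℝ) : ℝ := Real.sqrt (K * γ) * KvC K γ ^ (-(γ + 1) / 2)

/-- `b = K_c ((γ+1)/(2(γ−1))) a^{(3−γ)/(2(γ−1))}`. -/
def bP (K γ : ℝ) (v : ℝ → ℝ → ℝ) (t x : ℝ) : ℝ :=
  KcC K γ * ((γ + 1) / (2 * (γ - 1))) * aP K γ v t x ^ ((3 - γ) / (2 * (γ - 1)))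

/-- The p-system `v_t − u_x = 0`, `u_t + p_x = 0`, `p = K v^{−γ}`, satisfied
pointwise on `D`, together with positivity of the specific volume. -/
def PSystem (K γ : ℝ) (v u : ℝ → ℝ → ℝ) (D : Set (ℝ × ℝ)) : Prop :=
  ∀ t x, (t, x) ∈ D →
    0 < v t x ∧
    pt v t x - px u t x = 0 ∧
    pt u t x + px (fun t x => K * v t x ^ (-γ)) t x = 0

/-- initial value of `a` computed from the initial data. -/
def a0P (K γ : ℝ) (v₀ : ℝ → ℝ) (x : ℝ) : ℝ :=
  2 * Real.sqrt (K * γ) / (γ - 1) * v₀ x ^ (-(γ - 1) / 2)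

def s0P (K γ : ℝ) (v₀ u₀ : ℝ → ℝ) (x : ℝ) : ℝ := u₀ x + a0P K γ v₀ x

def r0P (K γ : ℝ) (v₀ u₀ : ℝ → ℝ) (x : ℝ) : ℝ := u₀ x - a0P K γ v₀ x

/-- initial value of `α` computed from the initial data. -/
def alpha0P (K γ : ℝ) (v₀ u₀ : ℝ → ℝ) (x : ℝ) : ℝ :=
  a0P K γ v₀ x ^ ((γ + 1) / (2 * (γ - 1))) * deriv (s0P K γ v₀ u₀) x

/-- initial value of `β` computed from the initial data. -/
def beta0P (K γ : ℝ) (v₀ u₀ : ℝ → ℝ) (x : ℝ) : ℝ :=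
  a0P K γ v₀ x ^ ((γ + 1) / (2 * (γ - 1))) * deriv (r0P K γ v₀ u₀) x

/-- Condition A on the isentropic initial data: positive density,
C¹ data with finite C¹ norm, and (when 1 < γ < 5/3) the gradient variables
are bounded above initially (`Y < ∞` and `Q < ∞`); a far-field vacuum is allowed. -/
def CondA (K γ : ℝ) (v₀ u₀ : ℝ → ℝ) : Prop :=
  (∀ x, 0 < v₀ x) ∧
  ContDiff ℝ 1 (fun x => (v₀ x)⁻¹) ∧ ContDiff ℝ 1 u₀ ∧
  (∃ C : ℝ, ∀ x, |(v₀ x)⁻¹| + |deriv (fun y => (v₀ y)⁻¹) x| + |u₀ x| + |deriv u₀ x| ≤ C) ∧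
  (γ < 5 / 3 →
    BddAbove (Set.range (alpha0P K γ v₀ u₀)) ∧ BddAbove (Set.range (beta0P K γ v₀ u₀)))

-- helpers
def uncur (f : ℝ → ℝ → ℝ) : ℝ × ℝ → ℝ := fun q => f q.1 q.2

@[simp] lemma uncur_apply (f : ℝ → ℝ → ℝ) (a b : ℝ) : uncur f (a, b) = f a b := rfl

lemma hasDerivAt_slice_t {F : ℝ × ℝ → ℝ} {L : ℝ × ℝ →L[ℝ] ℝ} {t x : ℝ}
    (h : HasFDerivAt F L (t, x)) : HasDerivAt (fun τ => F (τ, x)) (L (1, 0)) t := by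
  have hline : HasDerivAt (fun τ : ℝ => ((τ, x) : ℝ × ℝ)) ((1 : ℝ), (0 : ℝ)) t :=
    (hasDerivAt_id t).prodMk (hasDerivAt_const t x)
  exact h.comp_hasDerivAt t hline

lemma hasDerivAt_slice_x {F : ℝ × ℝ → ℝ} {L : ℝ × ℝ →L[ℝ] ℝ} {t x : ℝ}
    (h : HasFDerivAt F L (t, x)) : HasDerivAt (fun y => F (t, y)) (L (0, 1)) x := by
  have hline : HasDerivAt (fun y : ℝ => ((t, y) : ℝ × ℝ)) ((0 : ℝ), (1 : ℝ)) x :=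
    (hasDerivAt_const x t).prodMk (hasDerivAt_id x)
  exact h.comp_hasDerivAt x hline

lemma pt_eq_fderiv {f : ℝ → ℝ → ℝ} {L : ℝ × ℝ →L[ℝ] ℝ} {t x : ℝ}
    (h : HasFDerivAt (uncur f) L (t, x)) : pt f t x = L (1, 0) :=
  (hasDerivAt_slice_t h).deriv

lemma px_eq_fderiv {f : ℝ → ℝ → ℝ} {L : ℝ × ℝ →L[ℝ] ℝ} {t x : ℝ}
    (h : HasFDerivAt (uncur f) L (t, x)) : px f t x = L (0, 1) :=
  (hasDerivAt_slice_x h).deriv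

lemma final_algebra (γ k X z wv σ Lt Lx : ℝ) (hγ : 1 < γ) (hk : 0 < k) (hX : 0 < X)
    (hLt : Lt = -(σ * (k * X ^ (-(γ + 1) / 2))) * Lx +
        (z - σ * (k * X ^ (-(γ + 1) / 2)) * wv) *
          (-σ * (k * (-(γ + 1) / 2) * X ^ (-(γ + 1) / 2 - 1) * wv))) :
    (2 * k / (γ - 1) * X ^ (-(γ - 1) / 2)) ^ ((γ + 1) / (2 * (γ - 1))) * Lt +
      (z - σ * (k * X ^ (-(γ + 1) / 2)) * wv) *
        (((γ + 1) / (2 * (γ - 1))) *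
            (2 * k / (γ - 1) * X ^ (-(γ - 1) / 2)) ^ ((γ + 1) / (2 * (γ - 1)) - 1) *
          (-(k * X ^ (-(γ + 1) / 2)) * z)) +
      σ * (k * X ^ (-(γ + 1) / 2)) *
        ((2 * k / (γ - 1) * X ^ (-(γ - 1) / 2)) ^ ((γ + 1) / (2 * (γ - 1))) * Lx +
          (z - σ * (k * X ^ (-(γ + 1) / 2)) * wv) *
            (((γ + 1) / (2 * (γ - 1))) *
                (2 * k / (γ - 1) * X ^ (-(γ - 1) / 2)) ^ ((γ + 1) / (2 * (γ - 1)) - 1) *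
              (-(k * X ^ (-(γ + 1) / 2)) * wv))) =
    -(k * ((2 * k / (γ - 1)) ^ (2 / (γ - 1))) ^ (-(γ + 1) / 2) * ((γ + 1) / (2 * (γ - 1))) *
        (2 * k / (γ - 1) * X ^ (-(γ - 1) / 2)) ^ ((3 - γ) / (2 * (γ - 1)))) *
      ((2 * k / (γ - 1) * X ^ (-(γ - 1) / 2)) ^ ((γ + 1) / (2 * (γ - 1))) *
        (z - σ * (k * X ^ (-(γ + 1) / 2)) * wv)) ^ 2 := by
  have hγ0 : (0:ℝ) < γ - 1 := by linarith
  set e : ℝ := -(γ + 1) / 2 with he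
  set ea : ℝ := -(γ - 1) / 2 with hea
  set m' : ℝ := (γ + 1) / (2 * (γ - 1)) with hm'
  set Ca : ℝ := 2 * k / (γ - 1) with hCadef
  have hCa : (0:ℝ) < Ca := by rw [hCadef]; positivity
  have hXea : (0:ℝ) < X ^ ea := Real.rpow_pos_of_pos hX _
  set Aa : ℝ := Ca * X ^ ea with hAadef
  have hAa : (0:ℝ) < Aa := mul_pos hCa hXea
  have hE2 : (3 - γ) / (2 * (γ - 1)) = m' - 1 := by
    rw [hm']; field_simp; ring
  have hEPP : Aa ^ m' = Aa ^ (m' - 1) * Aa := by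
    conv_lhs => rw [show m' = (m' - 1) + 1 by ring]
    rw [Real.rpow_add_one hAa.ne']
  have hF1 : k * (Ca ^ (2 / (γ - 1))) ^ e * (Aa ^ (m' - 1) * Aa) ^ 2 = k * X ^ e := by
    rw [← hEPP]
    calc k * (Ca ^ (2 / (γ - 1))) ^ e * (Aa ^ m') ^ 2
        = k * Ca ^ (2 / (γ - 1) * e) * ((Ca ^ m' * (X ^ ea) ^ m') ^ 2) := by
          rw [← Real.rpow_mul hCa.le, hAadef, Real.mul_rpow hCa.le hXea.le]
      _ = k * Ca ^ (2 / (γ - 1) * e) * (Ca ^ m' * Ca ^ m' * ((X ^ ea) ^ m' * (X ^ ea) ^ m')) := by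
          ring
      _ = k * (Ca ^ (2 / (γ - 1) * e) * Ca ^ (m' + m')) * (X ^ (ea * m') * X ^ (ea * m')) := by
          rw [Real.rpow_add hCa m' m', ← Real.rpow_mul hX.le]; ring
      _ = k * Ca ^ (2 / (γ - 1) * e + (m' + m')) * X ^ (ea * m' + ea * m') := by
          rw [← Real.rpow_add hCa, ← Real.rpow_add hX]
      _ = k * Ca ^ (0:ℝ) * X ^ e := by
          rw [show 2 / (γ - 1) * e + (m' + m') = 0 by rw [he, hm']; field_simp; ring,
              show ea * m' + ea * m' = e by rw [hea, hm', he]; field_simp; ring]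
      _ = k * X ^ e := by rw [Real.rpow_zero, mul_one]
  have hs : k * e * Ca = -2 * m' * k ^ 2 := by
    rw [he, hm', hCadef]; field_simp
  have hF2 : k * e * X ^ (e - 1) * Aa = -2 * m' * (k * X ^ e) ^ 2 := by
    calc k * e * X ^ (e - 1) * (Ca * X ^ ea)
        = k * e * Ca * (X ^ (e - 1) * X ^ ea) := by ring
      _ = k * e * Ca * X ^ (e - 1 + ea) := by rw [Real.rpow_add hX]
      _ = k * e * Ca * X ^ (e + e) := by
          rw [show e - 1 + ea = e + e by rw [he, hea]; ring]
      _ = k * e * Ca * (X ^ e * X ^ e) := by rw [Real.rpow_add hX]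
      _ = -2 * m' * (k * X ^ e) ^ 2 := by linear_combination (X ^ e * X ^ e) * hs
  rw [hLt, hE2, hEPP]
  linear_combination (-σ * Aa ^ (m' - 1) * (z - σ * (k * X ^ e) * wv) * wv) * hF2 +
    (m' * Aa ^ (m' - 1) * (z - σ * (k * X ^ e) * wv) ^ 2) * hF1

theorem riccati_aux (K γ T : ℝ) (hK : 0 < K) (hγ : 1 < γ) (hT : 0 < T)
    (v u : ℝ → ℝ → ℝ)
    (hv : IsC2On v (Ioo 0 T ×ˢ univ)) (hu : IsC2On u (Ioo 0 T ×ˢ univ))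
    (hsys : PSystem K γ v u (Ioo 0 T ×ˢ univ))
    (σ : ℝ) (hσ : σ = 1 ∨ σ = -1)
    (t x : ℝ) (ht : t ∈ Ioo (0:ℝ) T) :
    pt (fun a b => aP K γ v a b ^ ((γ + 1) / (2 * (γ - 1)))
          * px (fun a' b' => u a' b' + σ * aP K γ v a' b') a b) t x
      + σ * cP K γ v t x * px (fun a b => aP K γ v a b ^ ((γ + 1) / (2 * (γ - 1)))
          * px (fun a' b' => u a' b' + σ * aP K γ v a' b') a b) t x
      = -(bP K γ v t x) * (aP K γ v t x ^ ((γ + 1) / (2 * (γ - 1)))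
          * px (fun a' b' => u a' b' + σ * aP K γ v a' b') t x) ^ 2 := by
  have hγ0 : (0:ℝ) < γ - 1 := by linarith
  have hKγ : (0:ℝ) < K * γ := mul_pos hK (by linarith)
  have hk : (0:ℝ) < Real.sqrt (K * γ) := Real.sqrt_pos.mpr hKγ
  set D : Set (ℝ × ℝ) := Ioo 0 T ×ˢ (univ : Set ℝ) with hD
  have hDo : IsOpen D := isOpen_Ioo.prod isOpen_univ
  have hqD : ((t, x) : ℝ × ℝ) ∈ D := ⟨ht, trivial⟩
  have hv' : ContDiffOn ℝ 2 (uncur v) D := hv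
  have hu' : ContDiffOn ℝ 2 (uncur u) D := hu
  have hVpos : ∀ p ∈ D, 0 < uncur v p := by rintro ⟨a, b⟩ hp; exact (hsys a b hp).1
  have hVc : ∀ p ∈ D, ContDiffAt ℝ 2 (uncur v) p := fun p hp => hv'.contDiffAt (hDo.mem_nhds hp)
  have hUc : ∀ p ∈ D, ContDiffAt ℝ 2 (uncur u) p := fun p hp => hu'.contDiffAt (hDo.mem_nhds hp)
  have hVd : ∀ p ∈ D, HasFDerivAt (uncur v) (fderiv ℝ (uncur v) p) p := fun p hp =>
    ((hVc p hp).differentiableAt (by norm_num)).hasFDerivAt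
  have hUd : ∀ p ∈ D, HasFDerivAt (uncur u) (fderiv ℝ (uncur u) p) p := fun p hp =>
    ((hUc p hp).differentiableAt (by norm_num)).hasFDerivAt
  -- PDE in fderiv form
  have hPDE1 : ∀ p ∈ D, fderiv ℝ (uncur v) p (1, 0) = fderiv ℝ (uncur u) p (0, 1) := by
    rintro ⟨a, b⟩ hp
    have h := (hsys a b hp).2.1
    rw [pt_eq_fderiv (hVd _ hp), px_eq_fderiv (hUd _ hp)] at h
    linarith
  have hPDE2 : ∀ p ∈ D, fderiv ℝ (uncur u) p (1, 0)
      = K * γ * uncur v p ^ (-γ - 1) * fderiv ℝ (uncur v) p (0, 1) := by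
    rintro ⟨a, b⟩ hp
    have h := (hsys a b hp).2.2
    rw [pt_eq_fderiv (hUd _ hp)] at h
    have hx0 : uncur v (a, b) ≠ 0 := ne_of_gt (hVpos _ hp)
    have hsl : HasDerivAt (fun y => uncur v (a, y)) (fderiv ℝ (uncur v) (a, b) (0, 1)) b :=
      hasDerivAt_slice_x (hVd _ hp)
    have hpow := (hsl.rpow_const (p := -γ) (Or.inl hx0)).const_mul K
    have e2 : px (fun t x => K * v t x ^ (-γ)) a b
        = K * (fderiv ℝ (uncur v) (a, b) (0, 1) * (-γ) * uncur v (a, b) ^ (-γ - 1)) :=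
      hpow.deriv
    rw [e2] at h
    linear_combination h
  -- derivative of a
  have hAd : ∀ p ∈ D, HasFDerivAt (uncur (aP K γ v))
      ((-(Real.sqrt (K * γ) * uncur v p ^ (-(γ + 1) / 2))) • fderiv ℝ (uncur v) p) p := by
    intro p hp
    have h := ((hVd p hp).rpow_const (p := -(γ - 1) / 2)
        (Or.inl (ne_of_gt (hVpos p hp)))).const_mul (2 * Real.sqrt (K * γ) / (γ - 1))
    rw [smul_smul] at h
    have hsc : (-(Real.sqrt (K * γ) * uncur v p ^ (-(γ + 1) / 2)))
        = 2 * Real.sqrt (K * γ) / (γ - 1) * (-(γ - 1) / 2 * uncur v p ^ (-(γ - 1) / 2 - 1)) := by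
      rw [show (-(γ - 1) / 2 - 1 : ℝ) = -(γ + 1) / 2 by ring]
      field_simp
    rw [hsc]
    exact h
  -- derivative of c
  have hCd : ∀ p ∈ D, HasFDerivAt (uncur (cP K γ v))
      ((Real.sqrt (K * γ) * (-(γ + 1) / 2) * uncur v p ^ (-(γ + 1) / 2 - 1)) •
        fderiv ℝ (uncur v) p) p := by
    intro p hp
    have h := ((hVd p hp).rpow_const (p := -(γ + 1) / 2)
        (Or.inl (ne_of_gt (hVpos p hp)))).const_mul (Real.sqrt (K * γ))
    rw [smul_smul] at h
    have hsc : Real.sqrt (K * γ) * (-(γ + 1) / 2) * uncur v p ^ (-(γ + 1) / 2 - 1)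
        = Real.sqrt (K * γ) * (-(γ + 1) / 2 * uncur v p ^ (-(γ + 1) / 2 - 1)) := by ring
    rw [hsc]
    exact h
  -- the Riemann invariant
  set W : ℝ × ℝ → ℝ := uncur (fun a b => u a b + σ * aP K γ v a b) with hWdef
  have hWd : ∀ p ∈ D, HasFDerivAt W
      (fderiv ℝ (uncur u) p + (σ * -(Real.sqrt (K * γ) * uncur v p ^ (-(γ + 1) / 2))) •
        fderiv ℝ (uncur v) p) p := by
    intro p hp
    have h := (hUd p hp).add ((hAd p hp).const_mul σ)
    rw [smul_smul] at h
    exact h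
  have hWdiff : ∀ p ∈ D, HasFDerivAt W (fderiv ℝ W p) p := fun p hp =>
    (hWd p hp).differentiableAt.hasFDerivAt
  have hWf : ∀ p ∈ D, fderiv ℝ W p = fderiv ℝ (uncur u) p
      + (σ * -(Real.sqrt (K * γ) * uncur v p ^ (-(γ + 1) / 2))) • fderiv ℝ (uncur v) p :=
    fun p hp => (hWd p hp).fderiv
  set Wx : ℝ × ℝ → ℝ := fun q => fderiv ℝ W q (0, 1) with hWxdef
  have hWxval : ∀ p ∈ D, Wx p = fderiv ℝ (uncur u) p (0, 1)
      - σ * (Real.sqrt (K * γ) * uncur v p ^ (-(γ + 1) / 2)) * fderiv ℝ (uncur v) p (0, 1) := by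
    intro p hp
    simp only [hWxdef, hWf p hp, ContinuousLinearMap.add_apply, ContinuousLinearMap.coe_smul',
      Pi.smul_apply, smul_eq_mul]
    ring
  have hσ2 : σ * σ = 1 := by rcases hσ with h | h <;> rw [h] <;> norm_num
  have hWtval : ∀ p ∈ D, fderiv ℝ W p (1, 0)
      = -(σ * (Real.sqrt (K * γ) * uncur v p ^ (-(γ + 1) / 2))) * Wx p := by
    intro p hp
    rw [hWxval p hp]
    simp only [hWf p hp, ContinuousLinearMap.add_apply, ContinuousLinearMap.coe_smul',
      Pi.smul_apply, smul_eq_mul]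
    rw [hPDE1 p hp, hPDE2 p hp]
    have hsq : (Real.sqrt (K * γ) * uncur v p ^ (-(γ + 1) / 2)) ^ 2
        = K * γ * uncur v p ^ (-γ - 1) := by
      rw [mul_pow, ← Real.rpow_natCast (uncur v p ^ (-(γ + 1) / 2)) 2,
        ← Real.rpow_mul (hVpos p hp).le, Real.sq_sqrt hKγ.le,
        show (-(γ + 1) / 2 * ((2:ℕ):ℝ)) = -γ - 1 by push_cast; ring]
    linear_combination (-(fderiv ℝ (uncur v) p (0, 1))) * hsq +
      (-((Real.sqrt (K * γ) * uncur v p ^ (-(γ + 1) / 2)) ^ 2 * fderiv ℝ (uncur v) p (0, 1))) * hσ2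
  -- smoothness of W
  have hAc : ∀ p ∈ D, ContDiffAt ℝ 2 (uncur (aP K γ v)) p := fun p hp =>
    contDiffAt_const.mul ((hVc p hp).rpow_const_of_ne (ne_of_gt (hVpos p hp)))
  have hWc : ∀ p ∈ D, ContDiffAt ℝ 2 W p := fun p hp =>
    (hUc p hp).add (contDiffAt_const.mul (hAc p hp))
  -- second derivative machinery at (t, x)
  have hf1 : ContDiffAt ℝ 1 (fderiv ℝ W) (t, x) := (hWc _ hqD).fderiv_right (by norm_num)
  have hf1d : DifferentiableAt ℝ (fderiv ℝ W) (t, x) := hf1.differentiableAt one_ne_zero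
  have hWxhd : HasFDerivAt Wx
      ((fderiv ℝ W (t, x)).comp (0 : ℝ × ℝ →L[ℝ] ℝ × ℝ) +
        (fderiv ℝ (fderiv ℝ W) (t, x)).flip ((0:ℝ), (1:ℝ))) (t, x) := by
    rw [hWxdef]
    exact hf1d.hasFDerivAt.clm_apply (hasFDerivAt_const _ _)
  have hWxd : DifferentiableAt ℝ Wx (t, x) := hWxhd.differentiableAt
  have hWthd : HasFDerivAt (fun q => fderiv ℝ W q ((1:ℝ), (0:ℝ)))
      ((fderiv ℝ W (t, x)).comp (0 : ℝ × ℝ →L[ℝ] ℝ × ℝ) +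
        (fderiv ℝ (fderiv ℝ W) (t, x)).flip ((1:ℝ), (0:ℝ))) (t, x) :=
    hf1d.hasFDerivAt.clm_apply (hasFDerivAt_const _ _)
  have hsymm : fderiv ℝ (fderiv ℝ W) (t, x) (1, 0) (0, 1)
      = fderiv ℝ (fderiv ℝ W) (t, x) (0, 1) (1, 0) :=
    (hWc _ hqD).isSymmSndFDerivAt (by norm_num) (1, 0) (0, 1)
  -- Wt agrees with the transport formula near (t,x)
  have hWt_ev : (fun q => fderiv ℝ W q ((1:ℝ), (0:ℝ))) =ᶠ[nhds ((t, x) : ℝ × ℝ)]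
      fun q => -(σ * (Real.sqrt (K * γ) * uncur v q ^ (-(γ + 1) / 2))) * Wx q := by
    filter_upwards [hDo.mem_nhds hqD] with p hp using hWtval p hp
  have hCmul : HasFDerivAt
      (fun q => -(σ * (Real.sqrt (K * γ) * uncur v q ^ (-(γ + 1) / 2))))
      ((-σ) • ((Real.sqrt (K * γ) * (-(γ + 1) / 2) * uncur v (t, x) ^ (-(γ + 1) / 2 - 1)) •
        fderiv ℝ (uncur v) (t, x))) (t, x) := by
    have h := ((hCd _ hqD).const_mul σ).neg
    rw [← neg_smul] at h
    exact h
  have hprod := hCmul.mul hWxd.hasFDerivAt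
  have hWtf : fderiv ℝ (fun q => fderiv ℝ W q ((1:ℝ), (0:ℝ))) (t, x)
      = (fun q => -(σ * (Real.sqrt (K * γ) * uncur v q ^ (-(γ + 1) / 2)))) (t, x) •
          fderiv ℝ Wx (t, x)
        + Wx (t, x) • ((-σ) • ((Real.sqrt (K * γ) * (-(γ + 1) / 2) *
            uncur v (t, x) ^ (-(γ + 1) / 2 - 1)) • fderiv ℝ (uncur v) (t, x))) := by
    rw [hWt_ev.fderiv_eq]
    exact hprod.fderiv
  -- the key mixed-derivative identity
  have key1 : fderiv ℝ Wx (t, x) ((1:ℝ), (0:ℝ))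
      = -(σ * (Real.sqrt (K * γ) * v t x ^ (-(γ + 1) / 2))) * fderiv ℝ Wx (t, x) ((0:ℝ), (1:ℝ))
        + (fderiv ℝ (uncur u) (t, x) ((0:ℝ), (1:ℝ))
            - σ * (Real.sqrt (K * γ) * v t x ^ (-(γ + 1) / 2)) *
              fderiv ℝ (uncur v) (t, x) ((0:ℝ), (1:ℝ))) *
          (-σ * (Real.sqrt (K * γ) * (-(γ + 1) / 2) * v t x ^ (-(γ + 1) / 2 - 1) *
            fderiv ℝ (uncur v) (t, x) ((0:ℝ), (1:ℝ)))) := by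
    have h1 : fderiv ℝ Wx (t, x) ((1:ℝ), (0:ℝ))
        = fderiv ℝ (fderiv ℝ W) (t, x) (1, 0) (0, 1) := by
      rw [hWxhd.fderiv]; simp
    have h2 : fderiv ℝ (fun q => fderiv ℝ W q ((1:ℝ), (0:ℝ))) (t, x) ((0:ℝ), (1:ℝ))
        = fderiv ℝ (fderiv ℝ W) (t, x) (0, 1) (1, 0) := by
      rw [hWthd.fderiv]; simp
    rw [h1, hsymm, ← h2, hWtf]
    have hWxx := hWxval _ hqD
    simp only [uncur_apply] at hWxx
    simp only [ContinuousLinearMap.add_apply, ContinuousLinearMap.coe_smul',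
      Pi.smul_apply, smul_eq_mul, uncur_apply, hWxx]
  -- the gradient variable as a function on the plane
  have hA0 : (0:ℝ) < aP K γ v t x := by
    have hvtx : (0:ℝ) < v t x := hVpos _ hqD
    exact mul_pos (div_pos (mul_pos two_pos hk) hγ0) (Real.rpow_pos_of_pos hvtx _)
  have hApowhd : HasFDerivAt (fun q => uncur (aP K γ v) q ^ ((γ + 1) / (2 * (γ - 1))))
      ((((γ + 1) / (2 * (γ - 1))) * uncur (aP K γ v) (t, x) ^ ((γ + 1) / (2 * (γ - 1)) - 1)) •
        ((-(Real.sqrt (K * γ) * uncur v (t, x) ^ (-(γ + 1) / 2))) •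
          fderiv ℝ (uncur v) (t, x))) (t, x) :=
    (hAd _ hqD).rpow_const (Or.inl (by exact ne_of_gt hA0))
  have hGhd := hApowhd.mul hWxd.hasFDerivAt
  -- bridge : time derivative
  have hev_t : (fun τ => aP K γ v τ x ^ ((γ + 1) / (2 * (γ - 1)))
        * px (fun a' b' => u a' b' + σ * aP K γ v a' b') τ x) =ᶠ[nhds t]
      (fun τ => uncur (aP K γ v) (τ, x) ^ ((γ + 1) / (2 * (γ - 1))) * Wx (τ, x)) := by
    filter_upwards [isOpen_Ioo.eventually_mem ht] with τ hτ
    have hpD : ((τ, x) : ℝ × ℝ) ∈ D := ⟨hτ, trivial⟩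
    have hx : px (fun a' b' => u a' b' + σ * aP K γ v a' b') τ x = Wx (τ, x) :=
      px_eq_fderiv (f := fun a' b' => u a' b' + σ * aP K γ v a' b') (hWdiff _ hpD)
    rw [hx]
    rfl
  have hev_x : (fun y => aP K γ v t y ^ ((γ + 1) / (2 * (γ - 1)))
        * px (fun a' b' => u a' b' + σ * aP K γ v a' b') t y) =ᶠ[nhds x]
      (fun y => uncur (aP K γ v) (t, y) ^ ((γ + 1) / (2 * (γ - 1))) * Wx (t, y)) := by
    apply Filter.Eventually.of_forall
    intro y
    have hpD : ((t, y) : ℝ × ℝ) ∈ D := ⟨ht, trivial⟩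
    have hx : px (fun a' b' => u a' b' + σ * aP K γ v a' b') t y = Wx (t, y) :=
      px_eq_fderiv (f := fun a' b' => u a' b' + σ * aP K γ v a' b') (hWdiff _ hpD)
    show aP K γ v t y ^ ((γ + 1) / (2 * (γ - 1)))
        * px (fun a' b' => u a' b' + σ * aP K γ v a' b') t y
      = uncur (aP K γ v) (t, y) ^ ((γ + 1) / (2 * (γ - 1))) * Wx (t, y)
    rw [hx]
    rfl
  have hptG : pt (fun a b => aP K γ v a b ^ ((γ + 1) / (2 * (γ - 1)))
        * px (fun a' b' => u a' b' + σ * aP K γ v a' b') a b) t x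
      = ((uncur (aP K γ v) (t, x) ^ ((γ + 1) / (2 * (γ - 1)))) • fderiv ℝ Wx (t, x)
          + Wx (t, x) • ((((γ + 1) / (2 * (γ - 1))) *
              uncur (aP K γ v) (t, x) ^ ((γ + 1) / (2 * (γ - 1)) - 1)) •
            ((-(Real.sqrt (K * γ) * uncur v (t, x) ^ (-(γ + 1) / 2))) •
              fderiv ℝ (uncur v) (t, x)))) (1, 0) := by
    have h1 : pt (fun a b => aP K γ v a b ^ ((γ + 1) / (2 * (γ - 1)))
          * px (fun a' b' => u a' b' + σ * aP K γ v a' b') a b) t x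
        = deriv (fun τ => uncur (aP K γ v) (τ, x) ^ ((γ + 1) / (2 * (γ - 1))) * Wx (τ, x)) t :=
      hev_t.deriv_eq
    rw [h1]
    exact (hasDerivAt_slice_t hGhd).deriv
  have hpxG : px (fun a b => aP K γ v a b ^ ((γ + 1) / (2 * (γ - 1)))
        * px (fun a' b' => u a' b' + σ * aP K γ v a' b') a b) t x
      = ((uncur (aP K γ v) (t, x) ^ ((γ + 1) / (2 * (γ - 1)))) • fderiv ℝ Wx (t, x)
          + Wx (t, x) • ((((γ + 1) / (2 * (γ - 1))) *
              uncur (aP K γ v) (t, x) ^ ((γ + 1) / (2 * (γ - 1)) - 1)) •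
            ((-(Real.sqrt (K * γ) * uncur v (t, x) ^ (-(γ + 1) / 2))) •
              fderiv ℝ (uncur v) (t, x)))) (0, 1) := by
    have h1 : px (fun a b => aP K γ v a b ^ ((γ + 1) / (2 * (γ - 1)))
          * px (fun a' b' => u a' b' + σ * aP K γ v a' b') a b) t x
        = deriv (fun y => uncur (aP K γ v) (t, y) ^ ((γ + 1) / (2 * (γ - 1))) * Wx (t, y)) x :=
      hev_x.deriv_eq
    rw [h1]
    exact (hasDerivAt_slice_x hGhd).deriv
  have hpxW : px (fun a' b' => u a' b' + σ * aP K γ v a' b') t x = Wx (t, x) :=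
    px_eq_fderiv (f := fun a' b' => u a' b' + σ * aP K γ v a' b') (hWdiff _ hqD)
  -- assemble
  have hWxx : Wx (t, x) = fderiv ℝ (uncur u) (t, x) ((0:ℝ), (1:ℝ))
      - σ * (Real.sqrt (K * γ) * v t x ^ (-(γ + 1) / 2)) *
        fderiv ℝ (uncur v) (t, x) ((0:ℝ), (1:ℝ)) := by
    have := hWxval _ hqD
    simpa [uncur_apply] using this
  have hPDE1' : fderiv ℝ (uncur v) (t, x) ((1:ℝ), (0:ℝ))
      = fderiv ℝ (uncur u) (t, x) ((0:ℝ), (1:ℝ)) := hPDE1 _ hqD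
  rw [hptG, hpxG, hpxW]
  simp only [ContinuousLinearMap.add_apply, ContinuousLinearMap.coe_smul',
    Pi.smul_apply, smul_eq_mul, uncur_apply]
  rw [hPDE1', hWxx]
  simp only [bP, KcC, KvC, aP, cP]
  linear_combination final_algebra γ (Real.sqrt (K * γ)) (v t x)
    (fderiv ℝ (uncur u) (t, x) ((0:ℝ), (1:ℝ))) (fderiv ℝ (uncur v) (t, x) ((0:ℝ), (1:ℝ)))
    σ (fderiv ℝ Wx (t, x) ((1:ℝ), (0:ℝ))) (fderiv ℝ Wx (t, x) ((0:ℝ), (1:ℝ)))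
    hγ hk (hVpos _ hqD) key1

theorem statement2 (K γ T : ℝ) (hK : 0 < K) (hγ : 1 < γ) (hT : 0 < T)
    (v u : ℝ → ℝ → ℝ)
    (hv : IsC2On v (Ioo 0 T ×ˢ univ)) (hu : IsC2On u (Ioo 0 T ×ˢ univ))
    (hsys : PSystem K γ v u (Ioo 0 T ×ˢ univ)) :
    ∀ t x, (t, x) ∈ (Ioo 0 T ×ˢ univ : Set (ℝ × ℝ)) →
      pt (alphaP K γ v u) t x + cP K γ v t x * px (alphaP K γ v u) t x
        = -(bP K γ v t x) * (alphaP K γ v u t x) ^ 2 ∧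
      pt (betaP K γ v u) t x - cP K γ v t x * px (betaP K γ v u) t x
        = -(bP K γ v t x) * (betaP K γ v u t x) ^ 2 := by
  intro t x hq
  obtain ⟨ht, -⟩ := hq
  constructor
  · have h := riccati_aux K γ T hK hγ hT v u hv hu hsys 1 (Or.inl rfl) t x ht
    have e1 : alphaP K γ v u = fun a b => aP K γ v a b ^ ((γ + 1) / (2 * (γ - 1)))
        * px (fun a' b' => u a' b' + 1 * aP K γ v a' b') a b := by
      funext a b
      simp only [alphaP, px, sP, one_mul]
    rw [e1]
    rw [one_mul] at h
    exact h
  · have h := riccati_aux K γ T hK hγ hT v u hv hu hsys (-1) (Or.inr rfl) t x ht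
    have e2 : betaP K γ v u = fun a b => aP K γ v a b ^ ((γ + 1) / (2 * (γ - 1)))
        * px (fun a' b' => u a' b' + (-1) * aP K γ v a' b') a b := by
      funext a b
      simp only [betaP, px, rP, neg_one_mul, ← sub_eq_add_neg]
    rw [e2]
    linear_combination h
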